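/- Let S ⊆ ℤ^r be finite and nonempty, a_s ∈ K[n]\{0} for s ∈ S, and f ∈ K[n]. Let s, t ∈ S be two corner points of S and let a'_s and a'_t denote the aperiodic parts of a_s and a_t, respectively. If Spread(a'_s, a'_t) = ∅ (i.e., Disp(a'_s, a'_t) = −∞), then the aperiodic part of the denominator (in lowest terms) of any rational solution y ∈ K(n) of the PLDE ∑_{s∈S} a_s N^s y = f is 1 (a unit). -/

import Mathlib

open MvPolynomial

/-- The substitution homomorphism `n_j ↦ n_j + i_j` on `K[n₁,…,n_r]`. -/
noncomputable def mShiftHom (K : Type*) [Field K] {r : ℕ} (i : Fin r → ℤ) :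
    MvPolynomial (Fin r) K →ₐ[K] MvPolynomial (Fin r) K :=
  aeval (fun j => X j + C (i j : K))

/-- The shift automorphism `N^i` of `K[n₁,…,n_r]`, determined by `n_j ↦ n_j + i_j`. -/
noncomputable def mShift (K : Type*) [Field K] {r : ℕ} (i : Fin r → ℤ) :
    MvPolynomial (Fin r) K ≃ₐ[K] MvPolynomial (Fin r) K :=
  AlgEquiv.ofAlgHom (mShiftHom K i) (mShiftHom K (-i))
    (by apply MvPolynomial.algHom_ext; intro j; simp [mShiftHom])
    (by apply MvPolynomial.algHom_ext; intro j; simp [mShiftHom])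

/-- `Spread(p,q) = { i ∈ ℤ^r : gcd(p, N^i q) ≠ 1 }`, where `gcd ≠ 1` (not a unit)
is expressed as `¬ IsRelPrime`. -/
def mSpread {K : Type*} [Field K] {r : ℕ} (p q : MvPolynomial (Fin r) K) :
    Set (Fin r → ℤ) :=
  {i | ¬ IsRelPrime p (mShift K i q)}

/-- The canonical embedding of `K[n₁,…,n_r]` into its fraction field `K(n₁,…,n_r)`. -/
noncomputable def toFrac (K : Type*) [Field K] {r : ℕ} :
    MvPolynomial (Fin r) K →+* FractionRing (MvPolynomial (Fin r) K) :=
  algebraMap _ _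

/-- The shift automorphism `N^i` extended to the fraction field `K(n₁,…,n_r)`. -/
noncomputable def fShift (K : Type*) [Field K] {r : ℕ} (i : Fin r → ℤ) :
    FractionRing (MvPolynomial (Fin r) K) ≃+* FractionRing (MvPolynomial (Fin r) K) :=
  IsFractionRing.ringEquivOfRingEquiv (mShift K i).toRingEquiv

/-
Suppose the denominator `u * q` of a solution `p / (u * q)` (in lowest terms) had an aperiodic
irreducible factor `d`. Clearing denominators gives a polynomial identity in which every term
except the `s`-th is divisible by `N^s (u * q)`. Among the finitely many shifts `N^i d` dividing
`u * q`, take the one minimising `⟪v, i⟫` for the direction `v` of the corner `s`: then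
`N^(s + i) d` divides `N^s (u * q)`, but no `N^w (u * q)` with `w ≠ s` and not `N^s p`, so it
divides `a_s`, hence its aperiodic part `a'_s`. Doing the same at the corner `t`, shifts of `d`
divide both `a'_s` and `a'_t`, which puts their difference into `Spread(a'_s, a'_t) = ∅`.
-/

theorem Prime.dvd_of_sum_mul_prod_erase_eq {R ι : Type*} [CommRing R] [DecidableEq ι]
    {S : Finset ι} {a b D : ι → R} {f g : R} {s : ι} (hg : Prime g) (hs : s ∈ S)
    (h : ∑ w ∈ S, a w * b w * ∏ w' ∈ S.erase w, D w' = f * ∏ w ∈ S, D w)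
    (hgD : g ∣ D s) (hgb : ¬ g ∣ b s) (hgD' : ∀ w ∈ S, w ≠ s → ¬ g ∣ D w) : g ∣ a s := by
  have hterm : g ∣ a s * b s * ∏ w' ∈ S.erase s, D w' := by
    have hsplit : a s * b s * ∏ w' ∈ S.erase s, D w' =
        f * ∏ w ∈ S, D w - ∑ w ∈ S.erase s, a w * b w * ∏ w' ∈ S.erase w, D w' := by
      rw [← h, ← Finset.add_sum_erase S _ hs]
      ring
    rw [hsplit]
    refine dvd_sub (dvd_mul_of_dvd_right (hgD.trans (Finset.dvd_prod_of_mem D hs)) f)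
      (Finset.dvd_sum fun w hw => dvd_mul_of_dvd_right (hgD.trans ?_) _)
    exact Finset.dvd_prod_of_mem D (Finset.mem_erase.2 ⟨(Finset.ne_of_mem_erase hw).symm, hs⟩)
  have hprod : ¬ g ∣ ∏ w' ∈ S.erase s, D w' := fun hdvd => by
    obtain ⟨w, hw, hgw⟩ := hg.exists_mem_finset_dvd hdvd
    exact hgD' w (Finset.mem_of_mem_erase hw) (Finset.ne_of_mem_erase hw) hgw
  exact (hg.dvd_mul.1 ((hg.dvd_mul.1 hterm).resolve_right hprod)).resolve_right hgb

section Shift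

variable {K : Type*} [Field K] {r : ℕ}

theorem mShift_mShift (i j : Fin r → ℤ) (p : MvPolynomial (Fin r) K) :
    mShift K i (mShift K j p) = mShift K (i + j) p := by
  suffices h : (mShift K i).toAlgHom.comp (mShift K j).toAlgHom = (mShift K (i + j)).toAlgHom from
    DFunLike.congr_fun h p
  apply MvPolynomial.algHom_ext
  intro l
  simp [mShift, mShiftHom, add_assoc]

theorem mShift_zero (p : MvPolynomial (Fin r) K) : mShift K 0 p = p := by
  suffices h : (mShift K (0 : Fin r → ℤ)).toAlgHom = AlgHom.id K _ from DFunLike.congr_fun h p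
  apply MvPolynomial.algHom_ext
  intro l
  simp [mShift, mShiftHom]

theorem mShift_dvd_mShift_iff {i j : Fin r → ℤ} {p q : MvPolynomial (Fin r) K} :
    mShift K i p ∣ mShift K j q ↔ mShift K (i - j) p ∣ q := by
  rw [← map_dvd_iff (mShift K j) (a := mShift K (i - j) p), mShift_mShift, add_sub_cancel]

theorem isRelPrime_mShift_iff {i : Fin r → ℤ} {p q : MvPolynomial (Fin r) K} :
    IsRelPrime (mShift K i p) (mShift K i q) ↔ IsRelPrime p q :=
  ⟨IsRelPrime.of_map (mShift K i), fun h => IsRelPrime.of_map (mShift K i).symm (by simpa)⟩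

theorem mSpread_mShift (j : Fin r → ℤ) (p q : MvPolynomial (Fin r) K) :
    mSpread (mShift K j p) (mShift K j q) = mSpread p q := by
  ext i
  simp only [mSpread, Set.mem_ofPred_eq, not_iff_not]
  rw [mShift_mShift, add_comm, ← mShift_mShift, isRelPrime_mShift_iff]

theorem sub_mem_mSpread_of_mShift_dvd {c p q : MvPolynomial (Fin r) K} {i j : Fin r → ℤ}
    (hc : ¬ IsUnit c) (hp : mShift K i c ∣ p) (hq : mShift K j c ∣ q) :
    i - j ∈ mSpread p q := fun hrel =>
  hc <| (isUnit_map_iff (mShift K i) c).1 <|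
    hrel hp (mShift_dvd_mShift_iff.2 (by rwa [sub_sub_cancel]))

theorem finite_setOf_mShift_dvd_irreducible {d p : MvPolynomial (Fin r) K} (hd : Irreducible d)
    (hdfin : (mSpread d d).Finite) (hp : Irreducible p) :
    {i : Fin r → ℤ | mShift K i d ∣ p}.Finite := by
  rcases Set.eq_empty_or_nonempty {i : Fin r → ℤ | mShift K i d ∣ p} with hempty | ⟨i₀, hi₀⟩
  · simp [hempty]
  refine (hdfin.image (· + i₀)).subset fun i hi => ⟨i - i₀, ?_, sub_add_cancel i i₀⟩
  have hdvd : mShift K i d ∣ mShift K i₀ d :=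
    hi.trans ((hd.map (mShift K i₀)).dvd_symm hp hi₀)
  simpa using sub_mem_mSpread_of_mShift_dvd (j := 0) hd.not_isUnit
    (mShift_dvd_mShift_iff.1 hdvd) (by rw [mShift_zero])

theorem finite_setOf_mShift_dvd {d D : MvPolynomial (Fin r) K} (hd : Irreducible d)
    (hdfin : (mSpread d d).Finite) (hD : D ≠ 0) :
    {i : Fin r → ℤ | mShift K i d ∣ D}.Finite := by
  refine ((UniqueFactorizationMonoid.factors D).finite_toSet.biUnion fun p hp =>
    finite_setOf_mShift_dvd_irreducible hd hdfin
      (UniqueFactorizationMonoid.irreducible_of_factor p hp)).subset ?_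
  intro i hi
  obtain ⟨p, hp, hassoc⟩ := UniqueFactorizationMonoid.exists_mem_factors_of_dvd hD
    (hd.map (mShift K i)) hi
  exact Set.mem_biUnion hp hassoc.dvd

theorem dvd_of_dvd_mul_of_periodic {g u a : MvPolynomial (Fin r) K} (hg : Irreducible g)
    (hgfin : (mSpread g g).Finite) (hu : ∀ e, Irreducible e → e ∣ u → (mSpread e e).Infinite)
    (h : g ∣ u * a) : g ∣ a :=
  (hg.prime.dvd_mul.1 h).resolve_left fun hgu => hu g hg hgu hgfin

end Shift

section Equation

variable {K : Type*} [Field K] {r : ℕ}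

theorem fShift_toFrac (i : Fin r → ℤ) (p : MvPolynomial (Fin r) K) :
    fShift K i (toFrac K p) = toFrac K (mShift K i p) :=
  IsFractionRing.ringEquivOfRingEquiv_algebraMap _ p

theorem sum_mul_mShift_eq_of_solution {S : Finset (Fin r → ℤ)}
    {a : (Fin r → ℤ) → MvPolynomial (Fin r) K} {f p D : MvPolynomial (Fin r) K} (hD : D ≠ 0)
    (hsol : ∑ w ∈ S, toFrac K (a w) * fShift K w (toFrac K p / toFrac K D) = toFrac K f) :
    ∑ w ∈ S, a w * mShift K w p * ∏ w' ∈ S.erase w, mShift K w' D =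
      f * ∏ w ∈ S, mShift K w D := by
  have hinj : Function.Injective (toFrac K (r := r)) := IsFractionRing.injective _ _
  have hDw : ∀ w : Fin r → ℤ, toFrac K (mShift K w D) ≠ 0 := fun w =>
    (map_ne_zero_iff _ hinj).2 ((map_ne_zero_iff _ (mShift K w).injective).2 hD)
  apply hinj
  rw [map_sum, map_mul, map_prod, ← hsol, Finset.sum_mul]
  refine Finset.sum_congr rfl fun w hw => ?_
  rw [map_mul, map_mul, map_prod, map_div₀, fShift_toFrac, fShift_toFrac,
    ← Finset.mul_prod_erase S (fun w' => toFrac K (mShift K w' D)) hw]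
  field_simp [hDw w]

theorem exists_mShift_dvd_coeff_of_corner {S : Finset (Fin r → ℤ)}
    {a : (Fin r → ℤ) → MvPolynomial (Fin r) K} {f p D d : MvPolynomial (Fin r) K}
    {s : Fin r → ℤ} {v : Fin r → ℝ}
    (hid : ∑ w ∈ S, a w * mShift K w p * ∏ w' ∈ S.erase w, mShift K w' D =
      f * ∏ w ∈ S, mShift K w D)
    (hpD : IsRelPrime p D) (hD : D ≠ 0) (hs : s ∈ S)
    (hv : ∀ w ∈ S, w ≠ s → 0 < ∑ l, v l * ((w l - s l : ℤ) : ℝ))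
    (hd : Irreducible d) (hdfin : (mSpread d d).Finite) (hdD : d ∣ D) :
    ∃ j, mShift K j d ∣ a s := by
  obtain ⟨i, hiD, hmin⟩ := Set.exists_min_image _ (fun i : Fin r → ℤ => ∑ l, v l * (i l : ℝ))
    (finite_setOf_mShift_dvd hd hdfin hD) ⟨0, by rwa [Set.mem_ofPred_eq, mShift_zero]⟩
  refine ⟨s + i, (hd.map (mShift K (s + i))).prime.dvd_of_sum_mul_prod_erase_eq hs hid ?_ ?_ ?_⟩
  · rwa [mShift_dvd_mShift_iff, add_sub_cancel_left]
  · rw [mShift_dvd_mShift_iff, add_sub_cancel_left]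
    exact fun hip => (hd.map (mShift K i)).not_isUnit (hpD hip hiD)
  · intro w hw hws hdvd
    have hle := hmin _ (mShift_dvd_mShift_iff.1 hdvd)
    have hlin : ∑ l, v l * (((s + i - w) l : ℤ) : ℝ) =
        ∑ l, v l * (i l : ℝ) - ∑ l, v l * ((w l - s l : ℤ) : ℝ) := by
      rw [← Finset.sum_sub_distrib]
      refine Finset.sum_congr rfl fun l _ => ?_
      simp only [Pi.add_apply, Pi.sub_apply]
      push_cast
      ring
    linarith [hv w hw hws]

end Equation

theorem aperiodic_denominator_trivial_of_empty_spread_general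
    {K : Type*} [Field K] {r : ℕ}
    (S : Finset (Fin r → ℤ))
    (a : (Fin r → ℤ) → MvPolynomial (Fin r) K)
    (f : MvPolynomial (Fin r) K)
    (s t : Fin r → ℤ) (hs : s ∈ S) (ht : t ∈ S)
    (hscorner : ∃ v : Fin r → ℝ, v ≠ 0 ∧
      ∀ w ∈ S, w ≠ s → 0 < ∑ l, v l * ((w l - s l : ℤ) : ℝ))
    (htcorner : ∃ v : Fin r → ℝ, v ≠ 0 ∧
      ∀ w ∈ S, w ≠ t → 0 < ∑ l, v l * ((w l - t l : ℤ) : ℝ))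
    (us' as' ut' at' : MvPolynomial (Fin r) K)
    (hsfact : a s = us' * as')
    (hus' : ∀ d, Irreducible d → d ∣ us' → (mSpread d d).Infinite)
    (htfact : a t = ut' * at')
    (hut' : ∀ d, Irreducible d → d ∣ ut' → (mSpread d d).Infinite)
    (hspread : mSpread as' at' = ∅) :
    ∀ (y : FractionRing (MvPolynomial (Fin r) K))
      (pnum u q : MvPolynomial (Fin r) K),
      (∑ w ∈ S, toFrac K (a w) * fShift K w y = toFrac K f) →
      u * q ≠ 0 →
      y = toFrac K pnum / toFrac K (u * q) →
      IsRelPrime pnum (u * q) →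
      (∀ d, Irreducible d → d ∣ u → (mSpread d d).Infinite) →
      (∀ d, Irreducible d → d ∣ q → (mSpread d d).Finite) →
      IsUnit q := by
  rintro y pnum u q hsol huq rfl hcop - hq
  by_contra hqunit
  obtain ⟨d, hd, hdq⟩ := WfDvdMonoid.exists_irreducible_factor hqunit (right_ne_zero_of_mul huq)
  have hdfin := hq d hd hdq
  have hid := sum_mul_mShift_eq_of_solution huq hsol
  obtain ⟨vs, -, hvs⟩ := hscorner
  obtain ⟨vt, -, hvt⟩ := htcorner
  obtain ⟨i, hi⟩ := exists_mShift_dvd_coeff_of_corner hid hcop huq hs hvs hd hdfin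
    (dvd_mul_of_dvd_right hdq u)
  obtain ⟨j, hj⟩ := exists_mShift_dvd_coeff_of_corner hid hcop huq ht hvt hd hdfin
    (dvd_mul_of_dvd_right hdq u)
  rw [hsfact] at hi
  rw [htfact] at hj
  have hs' := dvd_of_dvd_mul_of_periodic (hd.map _) (by rwa [mSpread_mShift]) hus' hi
  have ht' := dvd_of_dvd_mul_of_periodic (hd.map _) (by rwa [mSpread_mShift]) hut' hj
  simpa [hspread] using sub_mem_mSpread_of_mShift_dvd hd.not_isUnit hs' ht'

/-- **Corollary.**  Let `s, t ∈ S` be two corner points of `S` and let `a'_s, a'_t` be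
the aperiodic parts of the coefficients `a_s, a_t`.  If `Spread(a'_s, a'_t) = ∅`
(i.e. `Disp(a'_s,a'_t) = -∞`), then the aperiodic part of the denominator (in lowest
terms) of any rational solution of the PLDE is `1` (a unit). -/
theorem aperiodic_denominator_trivial_of_empty_spread
    {K : Type*} [Field K] [CharZero K] {r : ℕ}
    (S : Finset (Fin r → ℤ)) (hS : S.Nonempty)
    (a : (Fin r → ℤ) → MvPolynomial (Fin r) K) (ha : ∀ w ∈ S, a w ≠ 0)
    (f : MvPolynomial (Fin r) K)
    (s t : Fin r → ℤ) (hs : s ∈ S) (ht : t ∈ S)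
    (hscorner : ∃ v : Fin r → ℝ, v ≠ 0 ∧
      ∀ w ∈ S, w ≠ s → 0 < ∑ l, v l * ((w l - s l : ℤ) : ℝ))
    (htcorner : ∃ v : Fin r → ℝ, v ≠ 0 ∧
      ∀ w ∈ S, w ≠ t → 0 < ∑ l, v l * ((w l - t l : ℤ) : ℝ))
    (us' as' ut' at' : MvPolynomial (Fin r) K)
    (hsfact : a s = us' * as')
    (hus' : ∀ d, Irreducible d → d ∣ us' → (mSpread d d).Infinite)
    (has' : ∀ d, Irreducible d → d ∣ as' → (mSpread d d).Finite)
    (htfact : a t = ut' * at')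
    (hut' : ∀ d, Irreducible d → d ∣ ut' → (mSpread d d).Infinite)
    (hat' : ∀ d, Irreducible d → d ∣ at' → (mSpread d d).Finite)
    (hspread : mSpread as' at' = ∅) :
    ∀ (y : FractionRing (MvPolynomial (Fin r) K))
      (pnum u q : MvPolynomial (Fin r) K),
      (∑ w ∈ S, toFrac K (a w) * fShift K w y = toFrac K f) →
      u * q ≠ 0 →
      y = toFrac K pnum / toFrac K (u * q) →
      IsRelPrime pnum (u * q) →
      (∀ d, Irreducible d → d ∣ u → (mSpread d d).Infinite) →
      (∀ d, Irreducible d → d ∣ q → (mSpread d d).Finite) →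
      IsUnit q :=
  aperiodic_denominator_trivial_of_empty_spread_general S a f s t hs ht hscorner htcorner us' as'
    ut' at' hsfact hus' htfact hut' hspread
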